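/- Let (S₁, step₁), (S₂, step₂), (T₁, step₁'), (T₂, step₂') be LTSs with base relations eq₁ : S₁ → T₁ → Prop and eq₂ : S₂ → T₂ → Prop. If R₁ : S₁ → T₁ → Prop is a functional bisimulation with respect to eq₁ and R₂ : S₂ → T₂ → Prop is a functional bisimulation with respect to eq₂, then the product relation R ((a,b), (c,d)) := R₁ a c ∧ R₂ b d is a functional bisimulation between the interleaving product of (S₁, step₁) and (S₂, step₂) and the interleaving product of (T₁, step₁') and (T₂, step₂'), with respect to the product base relation eq ((a,b), (c,d)) := eq₁ a c ∧ eq₂ b d. In particular, if a ∼ c and b ∼ d then (a, b) ∼ (c, d), i.e. functional bisimilarity is a congruence with respect to interleaving products. -/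

import Mathlib

/-- A relation `R` is a *functional bisimulation* between the LTSs `(S, stepS)` and
`(T, stepT)` with respect to the base relation `eq`. -/
def FunBisim {S T : Type*} (stepS : S → S → Prop) (stepT : T → T → Prop)
    (eq : S → T → Prop) (R : S → T → Prop) : Prop :=
  ∀ s t, R s t →
    (∀ s₁, Relation.ReflTransGen stepS s s₁ →
      ∃ t₁, Relation.ReflTransGen stepT t t₁ ∧ eq s₁ t₁ ∧ R s₁ t₁) ∧
    (∀ t₁, Relation.ReflTransGen stepT t t₁ →
      ∃ s₁, Relation.ReflTransGen stepS s s₁ ∧ eq s₁ t₁ ∧ R s₁ t₁)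

/-- States are *functionally bisimilar* if related by some functional bisimulation. -/
def FunBisimilar {S T : Type*} (stepS : S → S → Prop) (stepT : T → T → Prop)
    (eq : S → T → Prop) (s : S) (t : T) : Prop :=
  ∃ R : S → T → Prop, FunBisim stepS stepT eq R ∧ R s t

/-- The interleaving product of two LTSs. -/
def Interleave {S₁ S₂ : Type*} (step₁ : S₁ → S₁ → Prop) (step₂ : S₂ → S₂ → Prop) :
    S₁ × S₂ → S₁ × S₂ → Prop :=
  fun p q => (step₁ p.1 q.1 ∧ p.2 = q.2) ∨ (p.1 = q.1 ∧ step₂ p.2 q.2)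

/-! Reachability in an interleaving product is componentwise reachability, so the two component
bisimulations answer each challenge independently and their answers recombine into a pair. -/

namespace Interleave

variable {S₁ S₂ : Type*} {step₁ : S₁ → S₁ → Prop} {step₂ : S₂ → S₂ → Prop}

open Relation

theorem reflTransGen_iff {p q : S₁ × S₂} :
    ReflTransGen (Interleave step₁ step₂) p q ↔
      ReflTransGen step₁ p.1 q.1 ∧ ReflTransGen step₂ p.2 q.2 := by
  constructor
  · intro h
    refine ⟨h.lift' Prod.fst ?_, h.lift' Prod.snd ?_⟩ <;>
      rintro ⟨x₁, x₂⟩ ⟨y₁, y₂⟩ (⟨hs, rfl⟩ | ⟨rfl, hs⟩)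
    exacts [.single hs, .refl, .refl, .single hs]
  · rintro ⟨h₁, h₂⟩
    have first : ReflTransGen (Interleave step₁ step₂) p (q.1, p.2) :=
      h₁.lift (·, p.2) fun _ _ hs => .inl ⟨hs, rfl⟩
    have second : ReflTransGen (Interleave step₁ step₂) (q.1, p.2) q :=
      h₂.lift (q.1, ·) fun _ _ hs => .inr ⟨rfl, hs⟩
    exact first.trans second

end Interleave

section

variable {S₁ S₂ T₁ T₂ : Type*} {step₁ : S₁ → S₁ → Prop} {step₂ : S₂ → S₂ → Prop}
  {step₁' : T₁ → T₁ → Prop} {step₂' : T₂ → T₂ → Prop}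
  {eq₁ : S₁ → T₁ → Prop} {eq₂ : S₂ → T₂ → Prop}

theorem FunBisim.interleave {R₁ : S₁ → T₁ → Prop} {R₂ : S₂ → T₂ → Prop}
    (h₁ : FunBisim step₁ step₁' eq₁ R₁) (h₂ : FunBisim step₂ step₂' eq₂ R₂) :
    FunBisim (Interleave step₁ step₂) (Interleave step₁' step₂')
      (fun p q => eq₁ p.1 q.1 ∧ eq₂ p.2 q.2) (fun p q => R₁ p.1 q.1 ∧ R₂ p.2 q.2) := by
  rintro ⟨a, b⟩ ⟨c, d⟩ ⟨hac, hbd⟩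
  constructor
  · rintro ⟨a₁, b₁⟩ hab
    obtain ⟨ha, hb⟩ := Interleave.reflTransGen_iff.mp hab
    obtain ⟨c₁, hc, heq₁, hR₁⟩ := (h₁ a c hac).1 a₁ ha
    obtain ⟨d₁, hd, heq₂, hR₂⟩ := (h₂ b d hbd).1 b₁ hb
    exact ⟨(c₁, d₁), Interleave.reflTransGen_iff.mpr ⟨hc, hd⟩, ⟨heq₁, heq₂⟩, ⟨hR₁, hR₂⟩⟩
  · rintro ⟨c₁, d₁⟩ hcd
    obtain ⟨hc, hd⟩ := Interleave.reflTransGen_iff.mp hcd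
    obtain ⟨a₁, ha, heq₁, hR₁⟩ := (h₁ a c hac).2 c₁ hc
    obtain ⟨b₁, hb, heq₂, hR₂⟩ := (h₂ b d hbd).2 d₁ hd
    exact ⟨(a₁, b₁), Interleave.reflTransGen_iff.mpr ⟨ha, hb⟩, ⟨heq₁, heq₂⟩, ⟨hR₁, hR₂⟩⟩

theorem FunBisimilar.interleave {a : S₁} {b : S₂} {c : T₁} {d : T₂}
    (hac : FunBisimilar step₁ step₁' eq₁ a c) (hbd : FunBisimilar step₂ step₂' eq₂ b d) :
    FunBisimilar (Interleave step₁ step₂) (Interleave step₁' step₂')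
      (fun p q => eq₁ p.1 q.1 ∧ eq₂ p.2 q.2) (a, b) (c, d) :=
  let ⟨_, h₁, hR₁⟩ := hac
  let ⟨_, h₂, hR₂⟩ := hbd
  ⟨_, h₁.interleave h₂, hR₁, hR₂⟩

end

theorem funBisim_interleave {S₁ S₂ T₁ T₂ : Type*}
    (step₁ : S₁ → S₁ → Prop) (step₂ : S₂ → S₂ → Prop)
    (step₁' : T₁ → T₁ → Prop) (step₂' : T₂ → T₂ → Prop)
    (eq₁ : S₁ → T₁ → Prop) (eq₂ : S₂ → T₂ → Prop)
    (R₁ : S₁ → T₁ → Prop) (R₂ : S₂ → T₂ → Prop)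
    (h₁ : FunBisim step₁ step₁' eq₁ R₁) (h₂ : FunBisim step₂ step₂' eq₂ R₂) :
    FunBisim (Interleave step₁ step₂) (Interleave step₁' step₂')
        (fun p q => eq₁ p.1 q.1 ∧ eq₂ p.2 q.2)
        (fun p q => R₁ p.1 q.1 ∧ R₂ p.2 q.2) ∧
      ∀ (a : S₁) (b : S₂) (c : T₁) (d : T₂),
        FunBisimilar step₁ step₁' eq₁ a c → FunBisimilar step₂ step₂' eq₂ b d →
          FunBisimilar (Interleave step₁ step₂) (Interleave step₁' step₂')
            (fun p q => eq₁ p.1 q.1 ∧ eq₂ p.2 q.2) (a, b) (c, d) :=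
  ⟨h₁.interleave h₂, fun _ _ _ _ => FunBisimilar.interleave⟩
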